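/- Let G : (ℝᵐ,0) → (ℝᵖ,0), m ≥ p > 0, be an analytic map germ with Sing G ∩ G⁻¹(0) = {0}. Then G is a nice map germ (NMG): both the image Im G and the image of the singular locus G(Sing G) are well-defined set germs at 0, i.e., for all small enough ε₁, ε₂ > 0 one has (G(B_{ε₁}),0) = (G(B_{ε₂}),0) and (G(Sing G ∩ B_{ε₁}),0) = (G(Sing G ∩ B_{ε₂}),0). -/

import Mathlib

/-!
The singular set is closed, and near the origin it meets `G⁻¹(0)` only at `0`. If `A` is closed and
`0` is the only zero of `G` in `A ∩ closedBall 0 r`, then the image of the compact shell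
`A ∩ (closedBall 0 r \ ball 0 ε)` misses a neighbourhood of `0`, so `G(A ∩ B_r)` and `G(A ∩ B_ε)`
agree near `0`. This settles `G(Sing G)`, and `Im G` when `0` is an isolated zero of `G`.
Otherwise nonzero zeros of `G` accumulate at `0`; they are regular points, so by the submersion
theorem every `G(B_ε)` is a neighbourhood of `0`.
-/

open Metric Set

/-- The singular set of a map `G : ℝᵐ → ℝᵖ`: points where the derivative has rank `< p`. -/
noncomputable def singSet {m p : ℕ}
    (G : EuclideanSpace ℝ (Fin m) → EuclideanSpace ℝ (Fin p)) :
    Set (EuclideanSpace ℝ (Fin m)) :=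
  {x | LinearMap.rank
      ((fderiv ℝ G x : EuclideanSpace ℝ (Fin m) →L[ℝ] EuclideanSpace ℝ (Fin p)) :
        EuclideanSpace ℝ (Fin m) →ₗ[ℝ] EuclideanSpace ℝ (Fin p)) < (p : Cardinal)}

open Function Filter Topology

theorem LinearMap.rank_lt_finrank_iff_not_surjective {K V W : Type*} [DivisionRing K]
    [AddCommGroup V] [Module K V] [AddCommGroup W] [Module K W] [FiniteDimensional K W]
    (f : V →ₗ[K] W) : f.rank < Module.finrank K W ↔ ¬ Surjective f := by
  rw [← LinearMap.range_eq_top, LinearMap.rank, ← Module.finrank_eq_rank, Nat.cast_lt]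
  refine ⟨fun h htop => ?_, Submodule.finrank_lt⟩
  rw [htop, finrank_top] at h
  exact lt_irrefl _ h

theorem ContinuousLinearMap.isOpen_setOf_surjective {𝕜 E F : Type*} [NontriviallyNormedField 𝕜]
    [CompleteSpace 𝕜] [NormedAddCommGroup E] [NormedSpace 𝕜 E] [NormedAddCommGroup F]
    [NormedSpace 𝕜 F] [FiniteDimensional 𝕜 F] :
    IsOpen {L : E →L[𝕜] F | Surjective L} := by
  have : CompleteSpace F := FiniteDimensional.complete 𝕜 F
  refine isOpen_iff_mem_nhds.2 fun L₀ hL₀ => ?_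
  -- Near `L₀`, `L ∘ S` stays close to the unit `L₀ ∘ S = 1` for a right inverse `S` of `L₀`.
  obtain ⟨S, hS⟩ := (L₀ : E →ₗ[𝕜] F).exists_rightInverse_of_surjective
    (LinearMap.range_eq_top.2 hL₀)
  set S' : F →L[𝕜] E := LinearMap.toContinuousLinearMap S
  have hunit : IsUnit (L₀.comp S') := by
    convert isUnit_one
    ext y
    exact LinearMap.congr_fun hS y
  have hcomp : Continuous fun L : E →L[𝕜] F => L.comp S' := continuous_id.clm_comp continuous_const
  filter_upwards [hcomp.continuousAt.preimage_mem_nhds (Units.isOpen.mem_nhds hunit)] with L hL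
  exact Surjective.of_comp (ContinuousLinearMap.isUnit_iff_bijective.1 hL).2

theorem HasStrictFDerivAt.image_mem_nhds_of_surjective {𝕜 E F : Type*}
    [NontriviallyNormedField 𝕜] [NormedAddCommGroup E] [NormedSpace 𝕜 E] [CompleteSpace E]
    [NormedAddCommGroup F] [NormedSpace 𝕜 F] [CompleteSpace F] {f : E → F} {f' : E →L[𝕜] F}
    {a : E} (hf : HasStrictFDerivAt f f' a) (hsurj : Surjective f') {U : Set E} (hU : U ∈ 𝓝 a) :
    f '' U ∈ 𝓝 (f a) := by
  rw [← hf.map_nhds_eq_of_surj (LinearMap.range_eq_top.2 hsurj)]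
  exact image_mem_map hU

section ImageGerm

variable {X Y : Type*} [PseudoMetricSpace X] [PseudoMetricSpace Y]

/-- The paper's "`f(A)` is a well-defined set germ at `y₀`" is
`∃ r > 0, ImageGermConstant f A x₀ y₀ r`. -/
def ImageGermConstant (f : X → Y) (A : Set X) (x₀ : X) (y₀ : Y) (r : ℝ) : Prop :=
  ∀ ε₁ ε₂, 0 < ε₁ → ε₁ ≤ r → 0 < ε₂ → ε₂ ≤ r →
    ∃ δ > (0 : ℝ), f '' (A ∩ ball x₀ ε₁) ∩ ball y₀ δ = f '' (A ∩ ball x₀ ε₂) ∩ ball y₀ δ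

variable {f : X → Y} {A : Set X} {x₀ : X} {y₀ : Y} {r : ℝ}

theorem ImageGermConstant.mono {r' : ℝ} (h : ImageGermConstant f A x₀ y₀ r) (hr : r' ≤ r) :
    ImageGermConstant f A x₀ y₀ r' :=
  fun ε₁ ε₂ h₁ h₁' h₂ h₂' => h ε₁ ε₂ h₁ (h₁'.trans hr) h₂ (h₂'.trans hr)

theorem ImageGermConstant.of_forall_subset
    (h : ∀ ε, 0 < ε → ε ≤ r →
      ∃ δ > (0 : ℝ), f '' (A ∩ ball x₀ r) ∩ ball y₀ δ ⊆ f '' (A ∩ ball x₀ ε)) :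
    ImageGermConstant f A x₀ y₀ r := by
  have eq_of_le : ∀ ε, 0 < ε → ε ≤ r → ∃ δ > (0 : ℝ),
      f '' (A ∩ ball x₀ ε) ∩ ball y₀ δ = f '' (A ∩ ball x₀ r) ∩ ball y₀ δ := by
    intro ε hε hεr
    obtain ⟨δ, hδ, hsub⟩ := h ε hε hεr
    refine ⟨δ, hδ, (inter_subset_inter_left _ ?_).antisymm (subset_inter hsub inter_subset_right)⟩
    exact image_mono (inter_subset_inter_right _ (ball_subset_ball hεr))
  intro ε₁ ε₂ h₁ h₁' h₂ h₂'
  obtain ⟨δ₁, hδ₁, e₁⟩ := eq_of_le ε₁ h₁ h₁'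
  obtain ⟨δ₂, hδ₂, e₂⟩ := eq_of_le ε₂ h₂ h₂'
  have restrict : ∀ {S T : Set Y} {δ δ' : ℝ}, δ' ≤ δ → S ∩ ball y₀ δ = T ∩ ball y₀ δ →
      S ∩ ball y₀ δ' = T ∩ ball y₀ δ' := fun hδ h => by
    rw [← inter_eq_right.2 (ball_subset_ball hδ), ← inter_assoc, ← inter_assoc, h]
  exact ⟨min δ₁ δ₂, lt_min hδ₁ hδ₂,
    (restrict (min_le_left _ _) e₁).trans (restrict (min_le_right _ _) e₂).symm⟩

theorem exists_image_inter_ball_subset_of_isClosed [ProperSpace X] [T2Space Y]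
    (hf : Continuous f) (hA : IsClosed A) {ε : ℝ}
    (h : ∀ x ∈ A, f x = y₀ → dist x x₀ ≤ r → dist x x₀ < ε) :
    ∃ δ > (0 : ℝ), f '' (A ∩ ball x₀ r) ∩ ball y₀ δ ⊆ f '' (A ∩ ball x₀ ε) := by
  set K := A ∩ (closedBall x₀ r \ ball x₀ ε)
  have hK : IsCompact K := ((isCompact_closedBall _ _).diff isOpen_ball).inter_left hA
  have hy₀ : y₀ ∉ f '' K := by
    rintro ⟨x, ⟨hxA, hxr, hxε⟩, hx⟩
    exact hxε (h x hxA hx hxr)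
  obtain ⟨δ, hδ, hball⟩ := Metric.isOpen_iff.1 (hK.image hf).isClosed.isOpen_compl y₀ hy₀
  refine ⟨δ, hδ, ?_⟩
  rintro _ ⟨⟨x, ⟨hxA, hxr⟩, rfl⟩, hxδ⟩
  by_cases hxε : x ∈ ball x₀ ε
  · exact mem_image_of_mem f ⟨hxA, hxε⟩
  · exact absurd (mem_image_of_mem f (show x ∈ K from ⟨hxA, ball_subset_closedBall hxr, hxε⟩))
      (hball hxδ)

end ImageGerm

section CriticalSet

variable {E F : Type*} [NormedAddCommGroup E] [NormedSpace ℝ E] [NormedAddCommGroup F]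
  [NormedSpace ℝ F] [FiniteDimensional ℝ F] {G : E → F} {ε : ℝ}

theorem isClosed_setOf_not_surjective_fderiv (hG : ContDiff ℝ 1 G) :
    IsClosed {x | ¬ Surjective (fderiv ℝ G x)} :=
  ContinuousLinearMap.isOpen_setOf_surjective.isClosed_compl.preimage
    (hG.continuous_fderiv one_ne_zero)

variable [FiniteDimensional ℝ E]

theorem exists_imageGermConstant_univ (hG : ContDiff ℝ 1 G) (hε : 0 < ε)
    (hsing : {x | ¬ Surjective (fderiv ℝ G x)} ∩ G ⁻¹' {0} ∩ ball 0 ε ⊆ {0}) :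
    ∃ r > 0, ImageGermConstant G univ 0 0 r := by
  by_cases hzero : ∃ r > 0, ∀ x, G x = 0 → ‖x‖ ≤ r → x = 0
  · obtain ⟨r, hr, hzero⟩ := hzero
    refine ⟨r, hr, .of_forall_subset fun ε' hε' _ => ?_⟩
    refine exists_image_inter_ball_subset_of_isClosed hG.continuous isClosed_univ
      fun x _ hx hxr => ?_
    rw [hzero x hx (by simpa using hxr), dist_self]
    exact hε'
  · push Not at hzero
    refine ⟨ε, hε, .of_forall_subset fun ε' hε' hε'ε => ?_⟩
    obtain ⟨x, hx, hxε', hx0⟩ := hzero (ε' / 2) (by positivity)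
    have hsurj : Surjective (fderiv ℝ G x) := by
      by_contra hx'
      exact hx0 (hsing ⟨⟨hx', hx⟩, mem_ball_zero_iff.2 (by linarith)⟩)
    have himage := (hG.hasStrictFDerivAt one_ne_zero).image_mem_nhds_of_surjective hsurj
      (isOpen_ball.mem_nhds (mem_ball_zero_iff.2 (by linarith : ‖x‖ < ε')))
    rw [hx] at himage
    obtain ⟨δ, hδ, hball⟩ := Metric.mem_nhds_iff.1 himage
    exact ⟨δ, hδ, inter_subset_right.trans (by simpa using hball)⟩

theorem exists_imageGermConstant_critical (hG : ContDiff ℝ 1 G) (hε : 0 < ε)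
    (hsing : {x | ¬ Surjective (fderiv ℝ G x)} ∩ G ⁻¹' {0} ∩ ball 0 ε ⊆ {0}) :
    ∃ r > 0, ImageGermConstant G {x | ¬ Surjective (fderiv ℝ G x)} 0 0 r := by
  refine ⟨ε / 2, by positivity, .of_forall_subset fun ε' hε' _ => ?_⟩
  refine exists_image_inter_ball_subset_of_isClosed hG.continuous
    (isClosed_setOf_not_surjective_fderiv hG) fun x hxA hx hxr => ?_
  rw [hsing ⟨⟨hxA, hx⟩, mem_ball.2 (by linarith)⟩, dist_self]
  exact hε'

end CriticalSet

theorem singSet_eq_setOf_not_surjective {m p : ℕ}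
    (G : EuclideanSpace ℝ (Fin m) → EuclideanSpace ℝ (Fin p)) :
    singSet G = {x | ¬ Surjective (fderiv ℝ G x)} := by
  ext x
  have := (fderiv ℝ G x).toLinearMap.rank_lt_finrank_iff_not_surjective
  rwa [finrank_euclideanSpace_fin] at this

theorem stmt8_general {m p : ℕ}
    (G : EuclideanSpace ℝ (Fin m) → EuclideanSpace ℝ (Fin p))
    (hGan : ∀ x, AnalyticAt ℝ G x)
    (hiso : ∃ ε > (0 : ℝ), singSet G ∩ G ⁻¹' {0} ∩ ball 0 ε = {0}) :
    ∃ ε₀ > (0 : ℝ), ∀ ε₁ ε₂, 0 < ε₁ → ε₁ ≤ ε₀ → 0 < ε₂ → ε₂ ≤ ε₀ →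
      (∃ δ > (0 : ℝ),
        G '' ball 0 ε₁ ∩ ball 0 δ = G '' ball 0 ε₂ ∩ ball 0 δ) ∧
      (∃ δ > (0 : ℝ),
        G '' (singSet G ∩ ball 0 ε₁) ∩ ball 0 δ =
          G '' (singSet G ∩ ball 0 ε₂) ∩ ball 0 δ) := by
  obtain ⟨ε, hε, hiso⟩ := hiso
  have hG : ContDiff ℝ 1 G := AnalyticOnNhd.contDiff fun x _ => hGan x
  rw [singSet_eq_setOf_not_surjective] at hiso ⊢
  obtain ⟨r₁, hr₁, himage⟩ := exists_imageGermConstant_univ hG hε hiso.subset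
  obtain ⟨r₂, hr₂, hcritical⟩ := exists_imageGermConstant_critical hG hε hiso.subset
  refine ⟨min r₁ r₂, lt_min hr₁ hr₂, fun ε₁ ε₂ h₁ h₁' h₂ h₂' => ⟨?_, ?_⟩⟩
  · simpa only [univ_inter] using himage.mono (min_le_left _ _) ε₁ ε₂ h₁ h₁' h₂ h₂'
  · exact hcritical.mono (min_le_right _ _) ε₁ ε₂ h₁ h₁' h₂ h₂'

/-- Let `G : (ℝᵐ,0) → (ℝᵖ,0)`, `m ≥ p > 0`, be analytic with
`Sing G ∩ G⁻¹(0) = {0}` (as germs at the origin). Then `G` is a nice map germ: both the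
image `Im G` and the image of the singular locus `G(Sing G)` are well-defined set germs
at `0`, i.e. for all small enough `ε₁, ε₂ > 0` the germs of `G(B_{ε₁})` and `G(B_{ε₂})`
coincide, and likewise for `G(Sing G ∩ B_{ε₁})` and `G(Sing G ∩ B_{ε₂})`. -/
theorem stmt8 {m p : ℕ} (hp : 0 < p) (hpm : p ≤ m)
    (G : EuclideanSpace ℝ (Fin m) → EuclideanSpace ℝ (Fin p))
    (hGan : ∀ x, AnalyticAt ℝ G x) (hG0 : G 0 = 0)
    (hiso : ∃ ε > (0 : ℝ), singSet G ∩ G ⁻¹' {0} ∩ ball 0 ε = {0}) :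
    ∃ ε₀ > (0 : ℝ), ∀ ε₁ ε₂, 0 < ε₁ → ε₁ ≤ ε₀ → 0 < ε₂ → ε₂ ≤ ε₀ →
      (∃ δ > (0 : ℝ),
        G '' ball 0 ε₁ ∩ ball 0 δ = G '' ball 0 ε₂ ∩ ball 0 δ) ∧
      (∃ δ > (0 : ℝ),
        G '' (singSet G ∩ ball 0 ε₁) ∩ ball 0 δ =
          G '' (singSet G ∩ ball 0 ε₂) ∩ ball 0 δ) :=
  stmt8_general G hGan hiso
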